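/- Let A, B be positive definite n×n complex matrices with X = (A^{1/2} B A^{1/2})^{1/2} and Y = B^{1/2} A^{1/2}. If |A + Y| = A + |Y|, then Y is self-adjoint, i.e., A^{1/2} B^{1/2} = B^{1/2} A^{1/2}, and hence AB = BA. -/

import Mathlib

/-!
Squaring `|A + Y| = A + |Y|` and cancelling `A²` and `YᴴY = |Y|²` leaves
`AY + YᴴA = A|Y| + |Y|A`; multiplying by `A⁻¹` and taking traces gives `Re tr Y = tr |Y|`.
Write `Y = V|Y|` with `V` unitary and `c = |Y|^{1/2}`: then
`‖c(1 - V)‖²_F = 2 (tr |Y| - Re tr Y) = 0`, so `|Y| V = |Y|`, whence `Y = |Y|` is self-adjoint.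
Since `Y = B^{1/2} A^{1/2}`, this says that the square roots commute, and so do `A` and `B`.
-/

open Matrix
open scoped ComplexOrder

open Classical in
/-- The positive square root of a positive semidefinite matrix (junk value `0` otherwise). -/
noncomputable def msqrt {n : Type*} [Fintype n] [DecidableEq n] (A : Matrix n n ℂ) :
    Matrix n n ℂ :=
  if h : A.PosSemidef then (h.1.eigenvectorUnitary : Matrix n n ℂ) *
    diagonal ((↑) ∘ (√·) ∘ h.1.eigenvalues) * (star h.1.eigenvectorUnitary : Matrix n n ℂ) else 0

/-- The geometric mean `P # Q = P^{1/2} (P^{-1/2} Q P^{-1/2})^{1/2} P^{1/2}`. -/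
noncomputable def geoMean {n : Type*} [Fintype n] [DecidableEq n] (P Q : Matrix n n ℂ) :
    Matrix n n ℂ :=
  msqrt P * msqrt ((msqrt P)⁻¹ * Q * (msqrt P)⁻¹) * msqrt P

section

open scoped MatrixOrder

variable {n : Type*} [Fintype n] [DecidableEq n]

lemma msqrt_eq_cfcSqrt {A : Matrix n n ℂ} (hA : A.PosSemidef) : msqrt A = CFC.sqrt A := by
  rw [msqrt, dif_pos hA, CFC.sqrt_eq_cfc, cfc_nnreal_eq_real _ A hA.nonneg, hA.1.cfc_eq]
  simp only [IsHermitian.cfc, Unitary.conjStarAlgAut_apply]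
  congr 3
  funext i
  simp [Real.coe_sqrt, max_eq_left (hA.eigenvalues_nonneg i)]

lemma posSemidef_msqrt {A : Matrix n n ℂ} (hA : A.PosSemidef) : (msqrt A).PosSemidef := by
  rw [msqrt_eq_cfcSqrt hA]
  exact (CFC.sqrt_nonneg A).posSemidef

lemma msqrt_mul_msqrt {A : Matrix n n ℂ} (hA : A.PosSemidef) : msqrt A * msqrt A = A := by
  rw [msqrt_eq_cfcSqrt hA]
  exact CFC.sqrt_mul_sqrt_self A hA.nonneg

lemma isUnit_msqrt {A : Matrix n n ℂ} (hA : A.PosSemidef) (hu : IsUnit A) : IsUnit (msqrt A) :=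
  isUnit_of_mul_isUnit_left (y := msqrt A) (by rwa [msqrt_mul_msqrt hA])

lemma exists_mem_unitaryGroup_mul_msqrt {Y : Matrix n n ℂ} (hY : IsUnit Y) :
    ∃ V ∈ unitaryGroup n ℂ, V * msqrt (Yᴴ * Y) = Y := by
  have hYY := posSemidef_conjTranspose_mul_self Y
  set X := msqrt (Yᴴ * Y)
  have hXX : X * X = Yᴴ * Y := msqrt_mul_msqrt hYY
  have hX : IsUnit X.det :=
    (isUnit_iff_isUnit_det X).mp (isUnit_msqrt hYY (hY.star.mul hY))
  have hXH : Xᴴ = X := (posSemidef_msqrt hYY).isHermitian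
  refine ⟨Y * X⁻¹, mem_unitaryGroup_iff'.mpr ?_, nonsing_inv_mul_cancel_right X Y hX⟩
  calc star (Y * X⁻¹) * (Y * X⁻¹) = X⁻¹ * (Yᴴ * Y) * X⁻¹ := by
        rw [star_eq_conjTranspose, conjTranspose_mul, conjTranspose_nonsing_inv, hXH]; noncomm_ring
    _ = 1 := by rw [← hXX, ← mul_assoc, nonsing_inv_mul _ hX, one_mul, mul_nonsing_inv _ hX]

lemma trace_add_trace_conjTranspose_eq_of_mul_self_eq {A Y X : Matrix n n ℂ}
    (hA : A.IsHermitian) (hAu : IsUnit A) (hYX : Yᴴ * Y = X * X)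
    (h : (A + Y)ᴴ * (A + Y) = (A + X) * (A + X)) :
    trace Y + trace Yᴴ = 2 * trace X := by
  have hlin : A * Y + Yᴴ * A = A * X + X * A := by
    rw [conjTranspose_add, hA.eq] at h
    linear_combination (norm := noncomm_ring) h - hYX
  obtain ⟨u, rfl⟩ := hAu
  have := congrArg (fun M => trace ((↑u⁻¹ : Matrix n n ℂ) * M)) hlin
  simp only [mul_add, trace_add, ← mul_assoc, Units.inv_mul, one_mul, trace_units_conj'] at this
  rw [this]; ring

lemma mul_eq_self_of_trace_add_trace_conjTranspose_eq {V X : Matrix n n ℂ}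
    (hV : V ∈ unitaryGroup n ℂ) (hX : X.PosSemidef)
    (htr : trace (V * X) + trace (V * X)ᴴ = 2 * trace X) : V * X = X := by
  set c := msqrt X
  have hc : cᴴ = c := (posSemidef_msqrt hX).isHermitian
  have hcc : c * c = X := msqrt_mul_msqrt hX
  have hVV : V * Vᴴ = 1 := mem_unitaryGroup_iff.mp hV
  have hzero : c * (1 - V) = 0 := by
    rw [← trace_mul_conjTranspose_self_eq_zero_iff]
    calc trace (c * (1 - V) * (c * (1 - V))ᴴ) = trace ((1 - V) * (1 - Vᴴ) * (c * c)) := by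
          rw [conjTranspose_mul, hc, conjTranspose_sub, conjTranspose_one,
            show c * (1 - V) * ((1 - Vᴴ) * c) = c * ((1 - V) * (1 - Vᴴ) * c) by noncomm_ring,
            trace_mul_comm, mul_assoc]
      _ = 2 * trace X - (trace (V * X) + trace (V * X)ᴴ) := by
          rw [hcc, conjTranspose_mul, hX.isHermitian.eq, trace_mul_comm X,
            show (1 - V) * (1 - Vᴴ) = 1 - V - Vᴴ + V * Vᴴ by noncomm_ring, hVV]
          simp only [sub_mul, add_mul, one_mul, trace_sub, trace_add]
          ring
      _ = 0 := by rw [htr, sub_self]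
  have hXV : X * V = X := by
    have : X * (1 - V) = 0 := by rw [← hcc, mul_assoc, hzero, mul_zero]
    rw [mul_sub, mul_one, sub_eq_zero] at this
    exact this.symm
  calc V * X = V * (X * V)ᴴ := by rw [hXV, hX.isHermitian.eq]
    _ = X := by rw [conjTranspose_mul, hX.isHermitian.eq, ← mul_assoc, hVV, one_mul]

end

theorem stmt9_general {n : Type*} [Fintype n] [DecidableEq n] (A B : Matrix n n ℂ)
    (hA : A.PosDef) (hB : B.PosDef)
    (Y : Matrix n n ℂ) (hY : Y = msqrt B * msqrt A)
    (h : msqrt ((A + Y)ᴴ * (A + Y)) = A + msqrt (Yᴴ * Y)) :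
    Yᴴ = Y ∧ msqrt A * msqrt B = msqrt B * msqrt A ∧ A * B = B * A := by
  have hYY := posSemidef_conjTranspose_mul_self Y
  have hYu : IsUnit Y := hY ▸
    (isUnit_msqrt hB.posSemidef hB.isUnit).mul (isUnit_msqrt hA.posSemidef hA.isUnit)
  obtain ⟨V, hV, hVY⟩ := exists_mem_unitaryGroup_mul_msqrt hYu
  have htr : trace Y + trace Yᴴ = 2 * trace (msqrt (Yᴴ * Y)) :=
    trace_add_trace_conjTranspose_eq_of_mul_self_eq hA.isHermitian hA.isUnit
      (msqrt_mul_msqrt hYY).symm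
      (by rw [← h, msqrt_mul_msqrt (posSemidef_conjTranspose_mul_self _)])
  have hYabs : Y = msqrt (Yᴴ * Y) := by
    have := mul_eq_self_of_trace_add_trace_conjTranspose_eq hV (posSemidef_msqrt hYY)
      (by rwa [hVY])
    rwa [hVY] at this
  have hYH : Yᴴ = Y := hYabs ▸ (posSemidef_msqrt hYY).isHermitian
  have hAB : Commute (msqrt A) (msqrt B) := by
    rw [hY, conjTranspose_mul, (posSemidef_msqrt hA.posSemidef).isHermitian.eq,
      (posSemidef_msqrt hB.posSemidef).isHermitian.eq] at hYH
    exact hYH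
  refine ⟨hYH, hAB, ?_⟩
  rw [← msqrt_mul_msqrt hA.posSemidef, ← msqrt_mul_msqrt hB.posSemidef]
  exact (hAB.mul_left hAB).mul_right (hAB.mul_left hAB)

theorem stmt9 {n : Type*} [Fintype n] [DecidableEq n] (A B : Matrix n n ℂ)
    (hA : A.PosDef) (hB : B.PosDef)
    (X : Matrix n n ℂ) (hX : X = msqrt (msqrt A * B * msqrt A))
    (Y : Matrix n n ℂ) (hY : Y = msqrt B * msqrt A)
    (h : msqrt ((A + Y)ᴴ * (A + Y)) = A + msqrt (Yᴴ * Y)) :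
    Yᴴ = Y ∧ msqrt A * msqrt B = msqrt B * msqrt A ∧ A * B = B * A :=
  stmt9_general A B hA hB Y hY h
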